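/- arXiv:2410.16318 — 2 statements merged into one kernel-verified Lean document; each statement's English description precedes it below -/
import Mathlib

section
/- Let H be a positive bounded operator on a complex Hilbert space ℋ and let α ≥ 0 be a real number. Then for every n ∈ ℕ, (H^n + α^n·I)^(1/n) ≤ H + α·I in the order on self-adjoint operators. -/
open Filter Topology
open scoped NNReal ENNReal
noncomputable section

variable {H : Type*} [NormedAddCommGroup H] [InnerProductSpace ℂ H] [CompleteSpace H]

/-- The orthogonal projection onto the closure of the range of a bounded operator `T`. -/
def rangeProj (T : H →L[ℂ] H) : H →L[ℂ] H :=
  (LinearMap.range (T : H →ₗ[ℂ] H)).topologicalClosure.subtypeL ∘L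
    Submodule.orthogonalProjectionOnto (LinearMap.range (T : H →ₗ[ℂ] H)).topologicalClosure

/-- The positive `n`-th root of a (positive) operator, via the continuous functional calculus. -/
def nthRoot (T : H →L[ℂ] H) (n : ℕ) : H →L[ℂ] H :=
  CFC.nnrpow T ((n : ℝ≥0)⁻¹)

/-- The absolute value `|T| = (T*T)^(1/2)` of a bounded operator `T`. -/
def opAbs (T : H →L[ℂ] H) : H →L[ℂ] H :=
  CFC.sqrt (ContinuousLinearMap.adjoint T * T)

/-!
Both sides are continuous functions of `H₀`: by the functional calculus they are `f H₀` and
`g H₀` with `f t = (tⁿ + αⁿ)^(1/n)` and `g t = t + α`. Since the spectrum of `H₀` lies in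
`[0, ∞)`, monotonicity of the functional calculus reduces the claim to the scalar inequality
`tⁿ + αⁿ ≤ (t + α)ⁿ` for `t, α ≥ 0`.
-/

lemma Real.pow_add_pow_rpow_inv_le {x y : ℝ} (hx : 0 ≤ x) (hy : 0 ≤ y) {n : ℕ} (hn : n ≠ 0) :
    (x ^ n + y ^ n) ^ (n : ℝ)⁻¹ ≤ x + y := by
  simpa [Real.rpow_natCast] using
    Real.rpow_add_rpow_le_add hx hy (Nat.one_le_cast.mpr (Nat.one_le_iff_ne_zero.mpr hn))

section CFC

variable {A : Type*} [PartialOrder A] [Ring A] [StarRing A] [TopologicalSpace A]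
  [StarOrderedRing A] [Algebra ℝ A] [ContinuousFunctionalCalculus ℝ A IsSelfAdjoint]
  [NonnegSpectrumClass ℝ A] [IsSemitopologicalRing A] [T2Space A]

lemma CFC.pow_add_pow_smul_one_rpow_inv_le {a : A} (ha : 0 ≤ a) {α : ℝ} (hα : 0 ≤ α)
    {n : ℕ} (hn : n ≠ 0) :
    (a ^ n + α ^ n • (1 : A)) ^ (n : ℝ)⁻¹ ≤ a + α • (1 : A) := by
  have ha_sa : IsSelfAdjoint a := IsSelfAdjoint.of_nonneg ha
  have hbase : a ^ n + α ^ n • (1 : A) = cfc (fun x : ℝ => x ^ n + α ^ n) a := by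
    rw [cfc_add_const (α ^ n) (· ^ n) a, cfc_pow_id a n, Algebra.algebraMap_eq_smul_one]
  calc (a ^ n + α ^ n • (1 : A)) ^ (n : ℝ)⁻¹
      = cfc (fun x : ℝ => (x ^ n + α ^ n) ^ (n : ℝ)⁻¹) a := by
        have hnonneg : ∀ x ∈ spectrum ℝ a, 0 ≤ x ^ n + α ^ n := fun x hspec =>
          add_nonneg (pow_nonneg (spectrum_nonneg_of_nonneg ha hspec) n) (pow_nonneg hα n)
        rw [hbase, CFC.rpow_eq_cfc_real (cfc_nonneg hnonneg),
          ← cfc_comp' (· ^ (n : ℝ)⁻¹) (fun x : ℝ => x ^ n + α ^ n) a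
            (Real.continuous_rpow_const (by positivity)).continuousOn]
    _ ≤ cfc (fun x : ℝ => x + α) a :=
        cfc_mono fun x hx => Real.pow_add_pow_rpow_inv_le
          (spectrum_nonneg_of_nonneg ha hx) hα hn
    _ = a + α • (1 : A) := by
        rw [cfc_add_const α (fun x : ℝ => x) a, cfc_id' ℝ a, Algebra.algebraMap_eq_smul_one]

end CFC

/-- `(0 : ℝ≥0)⁻¹ = 0`, and the non-unital `nnrpow` at exponent `0` is `0`, not `1`. -/
lemma nthRoot_zero (T : H →L[ℂ] H) : nthRoot T 0 = 0 := by
  simp [nthRoot, CFC.nnrpow_zero]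

lemma nthRoot_eq_rpow (T : H →L[ℂ] H) {n : ℕ} (hn : n ≠ 0) :
    nthRoot T n = T ^ (n : ℝ)⁻¹ := by
  rw [nthRoot, CFC.nnrpow_eq_pow, CFC.nnrpow_eq_rpow (by positivity)]
  push_cast
  rfl

/-- For a positive bounded operator `H₀` and `α ≥ 0`, for every `n`,
`(H₀^n + αⁿ·I)^(1/n) ≤ H₀ + α·I` in the Loewner order. -/
theorem nthRoot_pow_add_le (H₀ : H →L[ℂ] H) (hpos : H₀.IsPositive)
    (α : ℝ) (hα : 0 ≤ α) (n : ℕ) :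
    nthRoot (H₀ ^ n + (α ^ n) • (1 : H →L[ℂ] H)) n ≤ H₀ + α • (1 : H →L[ℂ] H) := by
  have hH₀ : 0 ≤ H₀ := (ContinuousLinearMap.nonneg_iff_isPositive H₀).mpr hpos
  rcases eq_or_ne n 0 with rfl | hn
  · rw [nthRoot_zero]
    exact add_nonneg hH₀ (smul_nonneg hα zero_le_one)
  · rw [nthRoot_eq_rpow _ hn]
    exact CFC.pow_add_pow_smul_one_rpow_inv_le hH₀ hα hn
end
end

section
/- Let {E_λ}_{λ∈ℝ} be a bounded resolution of the identity on a complex Hilbert space ℋ, and let S be an invertible operator in B(ℋ). Then the family {R(S⁻¹E_λS)}_{λ∈ℝ} is also a bounded resolution of the identity on ℋ. -/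
open Filter Topology
open scoped NNReal ENNReal
noncomputable section

variable {H : Type*} [NormedAddCommGroup H] [InnerProductSpace ℂ H] [CompleteSpace H]

/-- A family of orthogonal projections `{E λ}_{λ ∈ ℝ}` is a *resolution of the identity*:
each `E λ` is an orthogonal projection, `⋀ E λ = 0`, `⋁ E λ = I`, the family is monotone
(in the Loewner order), and it is right-continuous, `E λ = ⋀_{λ' > λ} E λ'` (expressed via
the ranges of the projections). -/
structure IsResolutionOfIdentity (E : ℝ → H →L[ℂ] H) : Prop where
  proj : ∀ l : ℝ, IsSelfAdjoint (E l) ∧ IsIdempotentElem (E l)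
  iInf_bot : (⨅ l : ℝ, LinearMap.range (E l : H →ₗ[ℂ] H)) = ⊥
  iSup_top : (⨆ l : ℝ, LinearMap.range (E l : H →ₗ[ℂ] H)).topologicalClosure = ⊤
  mono : Monotone E
  rightCont : ∀ l : ℝ, LinearMap.range (E l : H →ₗ[ℂ] H) = ⨅ l' > l, LinearMap.range (E l' : H →ₗ[ℂ] H)

/-- A resolution of the identity is *bounded* if `E λ = 0` for `λ < −a` and `E λ = I` for
`λ > a`, for some real `a`. -/
def IsBoundedResolutionOfIdentity (E : ℝ → H →L[ℂ] H) : Prop :=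
  IsResolutionOfIdentity E ∧
    ∃ a : ℝ, (∀ l : ℝ, l < -a → E l = 0) ∧ (∀ l : ℝ, a < l → E l = 1)

/-! Conjugating by an invertible `S` replaces the range of `E λ` by its preimage under `S`, which
is again closed, so `R(S⁻¹ E λ S)` is the orthogonal projection onto `S⁻¹(ran E λ)`. Taking
preimages under `S` is an order automorphism of the lattice of subspaces, and `S` is a
homeomorphism, so this preserves infima, suprema and density. Since every axiom of a resolution of the
identity is a statement about ranges (for orthogonal projections, `P ≤ Q` iff `ran P ≤ ran Q`),
all of them transfer. -/

namespace ContinuousLinearMap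

variable {R M : Type*} [Semiring R] [AddCommMonoid M] [Module R M] [TopologicalSpace M]

theorem range_units_inv_mul_mul (u : (M →L[R] M)ˣ) (T : M →L[R] M) :
    LinearMap.range ((↑u⁻¹ * T * ↑u : M →L[R] M) : M →ₗ[R] M) =
      (LinearMap.range (T : M →ₗ[R] M)).comap (u : M →ₗ[R] M) := by
  have inv_apply (x : M) : (↑u⁻¹ : M →L[R] M) ((u : M →L[R] M) x) = x := by
    rw [← mul_apply_eq_comp, u.inv_mul, one_apply_eq_self]
  have apply_inv (x : M) : (u : M →L[R] M) ((↑u⁻¹ : M →L[R] M) x) = x := by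
    rw [← mul_apply_eq_comp, u.mul_inv, one_apply_eq_self]
  ext x
  simp only [LinearMap.mem_range, Submodule.mem_comap, coe_coe, mul_apply_eq_comp]
  constructor
  · rintro ⟨y, rfl⟩
    exact ⟨(u : M →L[R] M) y, (apply_inv _).symm⟩
  · rintro ⟨y, hy⟩
    exact ⟨(↑u⁻¹ : M →L[R] M) y, by rw [apply_inv, hy, inv_apply]⟩

end ContinuousLinearMap

theorem isStarProjection_rangeProj (T : H →L[ℂ] H) : IsStarProjection (rangeProj T) :=
  isStarProjection_starProjection

theorem range_rangeProj (T : H →L[ℂ] H) :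
    LinearMap.range (rangeProj T : H →ₗ[ℂ] H) =
      (LinearMap.range (T : H →ₗ[ℂ] H)).topologicalClosure :=
  Submodule.range_starProjection _

theorem IsStarProjection.rangeProj_eq {P : H →L[ℂ] H} (hP : IsStarProjection P) :
    rangeProj P = P := by
  refine ContinuousLinearMap.IsStarProjection.ext (isStarProjection_rangeProj P) hP ?_
  rw [range_rangeProj]
  exact (ContinuousLinearMap.IsIdempotentElem.isClosed_range hP.isIdempotentElem)
    |>.submodule_topologicalClosure_eq

theorem IsStarProjection.le_iff_range_le_range {P Q : H →L[ℂ] H} (hP : IsStarProjection P)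
    (hQ : IsStarProjection Q) :
    P ≤ Q ↔ LinearMap.range (P : H →ₗ[ℂ] H) ≤ LinearMap.range (Q : H →ₗ[ℂ] H) :=
  (ContinuousLinearMap.coe_le_coe_iff P Q).symm.trans <|
    (ContinuousLinearMap.IsStarProjection.isSymmetricProjection hP).le_iff_range_le_range
      (ContinuousLinearMap.IsStarProjection.isSymmetricProjection hQ)

theorem IsResolutionOfIdentity.rangeProj_units_conj {E : ℝ → H →L[ℂ] H}
    (hE : IsResolutionOfIdentity E) (u : (H →L[ℂ] H)ˣ) :
    IsResolutionOfIdentity fun l => rangeProj (↑u⁻¹ * E l * ↑u : H →L[ℂ] H) := by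
  let e : H ≃L[ℂ] H := ContinuousLinearEquiv.unitsEquiv ℂ H u
  -- `Φ K = K.comap u`
  -- `Φ K = K.comap u`
  let Φ : Submodule ℂ H ≃o Submodule ℂ H :=
    (Submodule.orderIsoMapComap (e : H ≃ₗ[ℂ] H)).symm
  have range_eq (l : ℝ) :
      LinearMap.range (rangeProj (↑u⁻¹ * E l * ↑u : H →L[ℂ] H) : H →ₗ[ℂ] H) =
        Φ (LinearMap.range (E l : H →ₗ[ℂ] H)) := by
    rw [range_rangeProj, ContinuousLinearMap.range_units_inv_mul_mul]
    exact ((ContinuousLinearMap.IsIdempotentElem.isClosed_range (hE.proj l).2).preimage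
      e.continuous).submodule_topologicalClosure_eq
  have hP (l : ℝ) : IsStarProjection (E l) := ⟨(hE.proj l).2, (hE.proj l).1⟩
  refine ⟨fun l => ⟨(isStarProjection_rangeProj _).isSelfAdjoint,
    (isStarProjection_rangeProj _).isIdempotentElem⟩, ?_, ?_, fun l l' hl => ?_, fun l => ?_⟩
  · simp only [range_eq, ← Φ.map_iInf, hE.iInf_bot, Φ.map_bot]
  · simp only [range_eq, ← Φ.map_iSup, ← Submodule.dense_iff_topologicalClosure_eq_top]
    exact (Submodule.dense_iff_topologicalClosure_eq_top.2 hE.iSup_top).preimage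
      e.toHomeomorph.isOpenMap
  · rw [(isStarProjection_rangeProj _).le_iff_range_le_range (isStarProjection_rangeProj _),
      range_eq, range_eq]
    exact Φ.monotone (((hP l).le_iff_range_le_range (hP l')).1 (hE.mono hl))
  · simp only [range_eq, hE.rightCont l, Φ.map_iInf]

/-- If `{E λ}` is a bounded resolution of the identity and `S` is invertible,
then `{R(S⁻¹ (E λ) S)}` is again a bounded resolution of the identity. -/
theorem isBoundedResolutionOfIdentity_rangeProj_conj (E : ℝ → H →L[ℂ] H)
    (hE : IsBoundedResolutionOfIdentity E) (S : H →L[ℂ] H) (hS : IsUnit S) :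
    IsBoundedResolutionOfIdentity (fun l : ℝ => rangeProj (Ring.inverse S * E l * S)) := by
  obtain ⟨hE, a, hE_zero, hE_one⟩ := hE
  obtain ⟨u, rfl⟩ := hS
  simp only [Ring.inverse_unit]
  refine ⟨hE.rangeProj_units_conj u, a, fun l hl => ?_, fun l hl => ?_⟩
  · simp only [hE_zero l hl, mul_zero, zero_mul,
      (IsStarProjection.zero (H →L[ℂ] H)).rangeProj_eq]
  · simp only [hE_one l hl, mul_one, u.inv_mul,
      (IsStarProjection.one (H →L[ℂ] H)).rangeProj_eq]
end
end
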